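/- Let A be a dg algebra whose cohomology H*(A), viewed as a subspace H ⊂ A complementing boundaries inside cocycles, is closed under multiplication (i.e. the product of any two elements of H lies in H). Take the Merkulov homotopy Q with Q|_H = 0. Then the induced minimal A_∞-structure on H*(A) satisfies m_n = 0 for all n ≥ 3, i.e. A is formal. -/

import Mathlib

/-!
Every summand of Merkulov's recursion for `λ_n`, `n ≥ 3`, contains a factor `Q (λ_m b)` with
`2 ≤ m < n` and the `b i` taken from the arguments. For `m = 2` this is `Q (b 0 * b 1)`, which
vanishes because `H` is closed under products and `Q` kills `H`; for `m ≥ 3`, `λ_m b = 0` by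
induction on `n`. Hence `λ_n` vanishes on `H`, and so does `m_n = Π ∘ λ_n`.
-/

def SatisfiesMerkulovRecursion {K A : Type*} [Field K] [Ring A] [Algebra K A]
    (𝒜 : ℤ → Submodule K A) (Q : A →ₗ[K] A) (lam : ∀ n : ℕ, (Fin n → A) → A) : Prop :=
  ∀ (n : ℕ), 3 ≤ n → ∀ (dd : Fin n → ℤ) (a : Fin n → A),
    (∀ i, a i ∈ 𝒜 (dd i)) →
    lam n a = - ∑ kk : Fin n,
      if _ : 1 ≤ (kk : ℕ) then
        ((-1 : K) ^ ((kk : ℕ) + ((n : ℤ) - (kk : ℕ) - 1) *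
            ∑ i ∈ Finset.univ.filter (fun i : Fin n => (i : ℕ) < (kk : ℕ)), dd i)) •
        ((if _ : (kk : ℕ) = 1 then
            -(a ⟨0, kk.pos⟩)
          else
            Q (lam (kk : ℕ) (fun i : Fin (kk : ℕ) => a (Fin.castLE kk.isLt.le i)))) *
         (if _ : n - (kk : ℕ) = 1 then
            -(a ⟨(kk : ℕ), kk.isLt⟩)
          else
            Q (lam (n - (kk : ℕ))
              (fun i : Fin (n - (kk : ℕ)) =>
                a ⟨(kk : ℕ) + (i : ℕ), Nat.add_lt_of_lt_sub' i.isLt⟩))))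
      else 0

namespace SatisfiesMerkulovRecursion

variable {K A : Type*} [Field K] [Ring A] [Algebra K A] {𝒜 : ℤ → Submodule K A}
  {H : Submodule K A} {Q : A →ₗ[K] A} {lam : ∀ n : ℕ, (Fin n → A) → A}

theorem lam_eq_zero_of_Q_lam_eq_zero (hrec : SatisfiesMerkulovRecursion 𝒜 Q lam)
    {n : ℕ} (hn : 3 ≤ n) {dd : Fin n → ℤ} {a : Fin n → A} (hdd : ∀ i, a i ∈ 𝒜 (dd i))
    (haH : ∀ i, a i ∈ H)
    (hQlam : ∀ m, 2 ≤ m → m < n → ∀ (dd' : Fin m → ℤ) (b : Fin m → A),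
      (∀ i, b i ∈ 𝒜 (dd' i)) → (∀ i, b i ∈ H) → Q (lam m b) = 0) :
    lam n a = 0 := by
  rw [hrec n hn dd a hdd, neg_eq_zero]
  refine Finset.sum_eq_zero fun kk _ => ?_
  by_cases hk : 1 ≤ (kk : ℕ)
  · rw [dif_pos hk]
    by_cases h1 : (kk : ℕ) = 1
    · have hright : n - (kk : ℕ) ≠ 1 := by omega
      rw [dif_neg hright, hQlam (n - kk) (by omega) (by omega) _ _
        (fun _ => hdd _) (fun _ => haH _), mul_zero, smul_zero]
    · rw [dif_neg h1, hQlam kk (by omega) kk.isLt _ _ (fun _ => hdd _) (fun _ => haH _),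
        zero_mul, smul_zero]
  · rw [dif_neg hk]

theorem lam_eq_zero_of_mem (hrec : SatisfiesMerkulovRecursion 𝒜 Q lam)
    (hlam2 : ∀ a : Fin 2 → A, lam 2 a = a 0 * a 1)
    (hHmul : ∀ x y : A, x ∈ H → y ∈ H → x * y ∈ H) (hQH : ∀ x ∈ H, Q x = 0) :
    ∀ n, 3 ≤ n → ∀ (dd : Fin n → ℤ) (a : Fin n → A),
      (∀ i, a i ∈ 𝒜 (dd i)) → (∀ i, a i ∈ H) → lam n a = 0 := by
  intro n
  induction n using Nat.strong_induction_on with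
  | _ n ih =>
    intro hn dd a hdd haH
    refine hrec.lam_eq_zero_of_Q_lam_eq_zero hn hdd haH fun m hm hmn dd' b hb hbH => ?_
    rcases hm.eq_or_lt with rfl | hm
    · rw [hlam2]
      exact hQH _ (hHmul _ _ (hbH 0) (hbH 1))
    · rw [ih m hmn hm dd' b hb hbH, map_zero]

end SatisfiesMerkulovRecursion

/-- Formality via Merkulov's construction.  Let `A` be a (dg) graded
algebra with grading `𝒜`, `H ⊆ A` a subspace (representing the cohomology `H*(A)`,
complementing the boundaries inside the cocycles) which is closed under multiplication,
`Q` the Merkulov homotopy with `Q|_H = 0`, `Π` the projection of `A` onto `H`, and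
`lam n` the Merkulov operations (recursively defined from `Q` and the product, with
`Q(lam 1 x) = −x`).  Then the induced minimal A_∞-structure `m_n = Π ∘ lam n` on
`H*(A)` vanishes for all `n ≥ 3`: on homogeneous arguments from `H` one has
`lam n = 0` and hence `m_n = Π(lam n) = 0`, i.e. `A` is formal. -/
theorem stmt_18 {K A : Type*} [Field K] [Ring A] [Algebra K A]
    (𝒜 : ℤ → Submodule K A)
    (H : Submodule K A)
    (hHmul : ∀ x y : A, x ∈ H → y ∈ H → x * y ∈ H)
    (Q : A →ₗ[K] A)
    (hQH : ∀ x ∈ H, Q x = 0)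
    (Pi : A →ₗ[K] A)
    (lam : ∀ n : ℕ, (Fin n → A) → A)
    (hlam2 : ∀ a : Fin 2 → A, lam 2 a = a 0 * a 1)
    (hrec : ∀ (n : ℕ) (hn : 3 ≤ n) (dd : Fin n → ℤ) (a : Fin n → A),
      (∀ i, a i ∈ 𝒜 (dd i)) →
      lam n a = - ∑ kk : Fin n,
        if hk : 1 ≤ (kk : ℕ) then
          ((-1 : K) ^ ((kk : ℕ) + ((n : ℤ) - (kk : ℕ) - 1) *
              ∑ i ∈ Finset.univ.filter (fun i : Fin n => (i : ℕ) < (kk : ℕ)), dd i)) •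
          ((if h1 : (kk : ℕ) = 1 then
              -(a ⟨0, by omega⟩)
            else
              Q (lam (kk : ℕ) (fun i : Fin (kk : ℕ) => a (Fin.castLE kk.isLt.le i)))) *
           (if h2 : n - (kk : ℕ) = 1 then
              -(a ⟨(kk : ℕ), kk.isLt⟩)
            else
              Q (lam (n - (kk : ℕ))
                (fun i : Fin (n - (kk : ℕ)) =>
                  a ⟨(kk : ℕ) + (i : ℕ), by have := i.isLt; have := kk.isLt; omega⟩))))
        else 0) :
    ∀ (n : ℕ), 3 ≤ n → ∀ (dd : Fin n → ℤ) (a : Fin n → A),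
      (∀ i, a i ∈ 𝒜 (dd i)) → (∀ i, a i ∈ H) →
      lam n a = 0 ∧ Pi (lam n a) = 0 := by
  intro n hn dd a hdd haH
  have hzero : lam n a = 0 :=
    SatisfiesMerkulovRecursion.lam_eq_zero_of_mem hrec hlam2 hHmul hQH n hn dd a hdd haH
  exact ⟨hzero, by rw [hzero, map_zero]⟩
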